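/- arXiv:2105.09922 — 2 statements merged into one kernel-verified Lean document; each statement's English description precedes it below -/
import Mathlib

section
/- For one-dimensional polygonal curves, the discrete Fréchet distance between the two-point curve ⟨1.5, 0.5⟩ and the curve ⟨2.5, −0.5, 0.5, −0.5, 0.5, …, −0.5, 0.5⟩ (starting at 2.5, followed by m alternating pairs −0.5, 0.5) equals 1 for any m ≥ 1. -/
/-- A legal step of a monotone coupling: each index stays or advances by one,
and at least one index advances. -/
def CouplingStep (a b : ℕ × ℕ) : Prop :=
  (b.1 = a.1 ∨ b.1 = a.1 + 1) ∧ (b.2 = a.2 ∨ b.2 = a.2 + 1) ∧ b ≠ a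

/-- A monotone coupling between sequences of lengths `m` and `n` (0-based indices):
it starts at (0,0), ends at (m-1, n-1), and advances by legal steps. -/
def IsCoupling (m n : ℕ) (c : List (ℕ × ℕ)) : Prop :=
  c.head? = some (0, 0) ∧ c.getLast? = some (m - 1, n - 1) ∧ List.Chain' CouplingStep c

/-- The cost of a coupling: the maximum distance over coupled pairs. -/
noncomputable def couplingCost {X : Type*} [PseudoMetricSpace X]
    (p q : ℕ → X) (c : List (ℕ × ℕ)) : ℝ :=
  (c.map fun ij => dist (p ij.1) (q ij.2)).foldr max 0

/-- The discrete Fréchet distance between the sequences `p 0, …, p (m-1)` and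
`q 0, …, q (n-1)`: the infimum of coupling costs over all monotone couplings. -/
noncomputable def dDF {X : Type*} [PseudoMetricSpace X] (m n : ℕ) (p q : ℕ → X) : ℝ :=
  sInf {r | ∃ c, IsCoupling m n c ∧ couplingCost p q c = r}

/-!
Every coupling starts with the pair of first points, so its cost is at least
`|1.5 - 2.5| = 1`. Conversely, the coupling that matches `1.5` with `2.5` and then
`0.5` with each remaining point has cost exactly `1`, because `|0.5 - (±0.5)| ≤ 1`.
-/

section Coupling

variable {X : Type*} [PseudoMetricSpace X] {p q : ℕ → X}

theorem dist_le_couplingCost {c : List (ℕ × ℕ)} {ij : ℕ × ℕ} (h : ij ∈ c) :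
    dist (p ij.1) (q ij.2) ≤ couplingCost p q c := by
  induction c with
  | nil => simp at h
  | cons a t ih =>
    rcases List.mem_cons.1 h with rfl | h
    · exact le_max_left _ _
    · exact (ih h).trans (le_max_right _ _)

theorem couplingCost_le {c : List (ℕ × ℕ)} {b : ℝ} (hb : 0 ≤ b)
    (h : ∀ ij ∈ c, dist (p ij.1) (q ij.2) ≤ b) : couplingCost p q c ≤ b := by
  induction c with
  | nil => exact hb
  | cons a t ih =>
    exact max_le (h a List.mem_cons_self) (ih fun ij hij => h ij (List.mem_cons_of_mem _ hij))

theorem IsCoupling.zero_mem {m n : ℕ} {c : List (ℕ × ℕ)} (hc : IsCoupling m n c) :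
    (0, 0) ∈ c :=
  List.mem_of_mem_head? hc.1

theorem dDF_eq_dist_of_couplingCost_le {m n : ℕ} {c : List (ℕ × ℕ)} (hc : IsCoupling m n c)
    (hcost : couplingCost p q c ≤ dist (p 0) (q 0)) : dDF m n p q = dist (p 0) (q 0) := by
  set S := {r | ∃ c, IsCoupling m n c ∧ couplingCost p q c = r}
  have hlower : ∀ r ∈ S, dist (p 0) (q 0) ≤ r := by
    rintro _ ⟨c', hc', rfl⟩
    exact dist_le_couplingCost hc'.zero_mem
  have hmem : dist (p 0) (q 0) ∈ S := ⟨c, hc, le_antisymm hcost (hlower _ ⟨c, hc, rfl⟩)⟩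
  exact le_antisymm (csInf_le ⟨_, hlower⟩ hmem) (le_csInf ⟨_, hmem⟩ hlower)

def cornerCoupling (n : ℕ) : List (ℕ × ℕ) :=
  (0, 0) :: (List.range' 1 n).map fun j => (1, j)

theorem isCoupling_cornerCoupling {n : ℕ} (hn : n ≠ 0) :
    IsCoupling 2 (n + 1) (cornerCoupling n) := by
  obtain ⟨k, rfl⟩ := Nat.exists_eq_succ_of_ne_zero hn
  refine ⟨rfl, ?_, ?_⟩
  · simp [cornerCoupling, List.getLast?_cons, List.getLast?_map, List.getLast?_range']
  · refine List.isChain_cons.2 ⟨by simp [List.range'_succ, CouplingStep], ?_⟩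
    refine List.isChain_map_of_isChain _ ?_ (List.isChain_range' 1 _ 1)
    rintro a b rfl
    simp [CouplingStep]

theorem couplingCost_cornerCoupling_le {n : ℕ}
    (h : ∀ j, 1 ≤ j → j ≤ n → dist (p 1) (q j) ≤ dist (p 0) (q 0)) :
    couplingCost p q (cornerCoupling n) ≤ dist (p 0) (q 0) := by
  refine couplingCost_le dist_nonneg fun ij hij => ?_
  rcases List.mem_cons.1 hij with rfl | hij
  · exact le_rfl
  · obtain ⟨j, hj, rfl⟩ := List.mem_map.1 hij
    rw [List.mem_range'_1] at hj
    exact h j hj.1 (by omega)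

theorem dDF_two_eq_dist {n : ℕ} (hn : n ≠ 0)
    (h : ∀ j, 1 ≤ j → j ≤ n → dist (p 1) (q j) ≤ dist (p 0) (q 0)) :
    dDF 2 (n + 1) p q = dist (p 0) (q 0) :=
  dDF_eq_dist_of_couplingCost_le (isCoupling_cornerCoupling hn) (couplingCost_cornerCoupling_le h)

end Coupling

/-- The discrete Fréchet distance between ⟨1.5, 0.5⟩ and
⟨2.5, −0.5, 0.5, −0.5, 0.5, …, −0.5, 0.5⟩ (2.5 followed by m alternating pairs) equals 1. -/
theorem dDF_abs2_abs (m : ℕ) (hm : 1 ≤ m) :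
    dDF 2 (2 * m + 1)
      (fun k => if k = 0 then (1.5 : ℝ) else 0.5)
      (fun k => if k = 0 then (2.5 : ℝ) else if k % 2 = 1 then -0.5 else 0.5) = 1 := by
  rw [dDF_two_eq_dist (by omega)]
  · norm_num [Real.dist_eq]
  · intro j hj _
    rcases Nat.mod_two_eq_zero_or_one j with hpar | hpar <;>
      norm_num [Real.dist_eq, hpar, Nat.one_le_iff_ne_zero.1 hj]
end

section
/- Let π be a 1D polygonal curve and let ĝ(π) be its growing curve, the sequence of local minima and maxima of the subsequence ⟨π(i) : π(i) ∉ Im(π|_{[1,i)})⟩. Then in ĝ(π), the subsequence of local maxima is strictly increasing and the subsequence of local minima is strictly decreasing, and consecutive vertices of ĝ(π) alternate between local minima and maxima. -/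
/-- Keep those vertices that strictly extend the range `[lo, hi]` attained so far. -/
noncomputable def growAux : ℝ → ℝ → List ℝ → List ℝ
  | _, _, [] => []
  | lo, hi, x :: xs =>
    if x < lo ∨ hi < x then x :: growAux (min lo x) (max hi x) xs
    else growAux lo hi xs

/-- Keep only the local minima and maxima: drop middle vertices of monotone triples. -/
noncomputable def collapse : List ℝ → List ℝ
  | a :: b :: c :: rest =>
    if (a < b ∧ b < c) ∨ (c < b ∧ b < a) then collapse (a :: c :: rest)
    else a :: collapse (b :: c :: rest)
  | l => l
termination_by l => l.length
decreasing_by all_goals simp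

/-- The growing curve of a 1D polygonal curve: the alternating local extrema of the
subsequence of vertices that strictly extend the range attained so far. -/
noncomputable def grow : List ℝ → List ℝ
  | [] => []
  | x :: xs => collapse (x :: growAux x x xs)

/-!
Every vertex kept by `growAux` lies outside the range of all vertices before it. So when
`collapse` keeps a turning vertex `b` between `a` and `c`, the vertex `c` overshoots `a` as well,
and the vertex that ends up following `b` lies at least as far out as `c`. Hence consecutive
vertices of the growing curve differ, and every turn goes strictly beyond the previous extremum
of the same kind.
-/

lemma growAux_cons (lo hi x : ℝ) (xs : List ℝ) :
    growAux lo hi (x :: xs) =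
      if x < lo ∨ hi < x then x :: growAux (min lo x) (max hi x) xs
      else growAux lo hi xs := by
  rw [growAux]

lemma collapse_cons_cons_cons (a b c : ℝ) (r : List ℝ) :
    collapse (a :: b :: c :: r) =
      if (a < b ∧ b < c) ∨ (c < b ∧ b < a) then collapse (a :: c :: r)
      else a :: collapse (b :: c :: r) := by
  rw [collapse]

def ExtendsRange : ℝ → ℝ → List ℝ → Prop
  | _, _, [] => True
  | lo, hi, x :: xs => (x < lo ∨ hi < x) ∧ ExtendsRange (min lo x) (max hi x) xs

lemma extendsRange_growAux : ∀ (lo hi : ℝ) (l : List ℝ), ExtendsRange lo hi (growAux lo hi l)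
  | _, _, [] => trivial
  | lo, hi, x :: xs => by
    rw [growAux_cons]
    split_ifs with h
    · exact ⟨h, extendsRange_growAux _ _ xs⟩
    · exact extendsRange_growAux lo hi xs

lemma collapse_cons_cons : ∀ (b c : ℝ) (r : List ℝ), ∃ d t,
    collapse (b :: c :: r) = b :: d :: t ∧ (c ≤ b → d ≤ c) ∧ (b ≤ c → c ≤ d)
  | b, c, [] => ⟨c, [], by rw [collapse.eq_def], fun _ => le_rfl, fun _ => le_rfl⟩
  | b, c, e :: r => by
    rw [collapse_cons_cons_cons]
    split_ifs with hmono
    · obtain ⟨d, t, heq, hdown, hup⟩ := collapse_cons_cons b e r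
      refine ⟨d, t, heq, fun hcb => ?_, fun hbc => ?_⟩
      · rcases hmono with ⟨hbc, -⟩ | ⟨hec, hcb'⟩
        · exact absurd hcb hbc.not_ge
        · exact (hdown (hec.trans hcb').le).trans hec.le
      · rcases hmono with ⟨hbc', hce⟩ | ⟨-, hcb⟩
        · exact hce.le.trans (hup (hbc'.trans hce).le)
        · exact absurd hbc hcb.not_ge
    · obtain ⟨d, t, heq, -, -⟩ := collapse_cons_cons c e r
      exact ⟨c, d :: t, by rw [heq], fun _ => le_rfl, fun _ => le_rfl⟩
termination_by _ _ r => r.length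

inductive OutwardZigzag : List ℝ → Prop
  | nil : OutwardZigzag []
  | singleton (a : ℝ) : OutwardZigzag [a]
  | pair {a b : ℝ} (h : a ≠ b) : OutwardZigzag [a, b]
  | up {a b c : ℝ} {r : List ℝ} (hab : a < b) (hca : c < a) (h : OutwardZigzag (b :: c :: r)) :
      OutwardZigzag (a :: b :: c :: r)
  | down {a b c : ℝ} {r : List ℝ} (hba : b < a) (hac : a < c)
      (h : OutwardZigzag (b :: c :: r)) : OutwardZigzag (a :: b :: c :: r)

namespace OutwardZigzag

variable {l : List ℝ}

lemma tail (h : OutwardZigzag l) : OutwardZigzag l.tail := by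
  cases h with
  | nil => exact nil
  | singleton => exact nil
  | pair => exact singleton _
  | up _ _ h => exact h
  | down _ _ h => exact h

lemma drop (h : OutwardZigzag l) (i : ℕ) : OutwardZigzag (l.drop i) := by
  induction i with
  | zero => exact h
  | succ i ih => simpa only [List.tail_drop] using ih.tail

lemma ne_of_cons_cons {a b : ℝ} {r : List ℝ} (h : OutwardZigzag (a :: b :: r)) : a ≠ b := by
  cases h with
  | pair h => exact h
  | up hab _ _ => exact hab.ne
  | down hba _ _ => exact hba.ne'

lemma turn_of_cons_cons_cons {a b c : ℝ} {r : List ℝ} (h : OutwardZigzag (a :: b :: c :: r)) :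
    (a < b → c < a) ∧ (b < a → a < c) := by
  cases h with
  | up hab hca _ => exact ⟨fun _ => hca, fun hba => absurd hab hba.not_gt⟩
  | down hba hac _ => exact ⟨fun hab => absurd hba hab.not_gt, fun _ => hac⟩

lemma getElem_ne (h : OutwardZigzag l) (i : ℕ) (hi : i + 1 < l.length) : l[i] ≠ l[i + 1] := by
  have hd := h.drop i
  rw [List.drop_eq_getElem_cons, List.drop_eq_getElem_cons] at hd
  exact hd.ne_of_cons_cons

lemma getElem_turn (h : OutwardZigzag l) (i : ℕ) (hi : i + 2 < l.length) :
    (l[i] < l[i + 1] → l[i + 2] < l[i]) ∧ (l[i + 1] < l[i] → l[i] < l[i + 2]) := by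
  have hd := h.drop i
  rw [List.drop_eq_getElem_cons, List.drop_eq_getElem_cons, List.drop_eq_getElem_cons] at hd
  exact hd.turn_of_cons_cons_cons

lemma cons_collapse {a b c : ℝ} {t : List ℝ} (hab : a ≠ b) (hup : a < b → c < a)
    (hdown : b < a → a < c) (h : OutwardZigzag (collapse (b :: c :: t))) :
    OutwardZigzag (a :: collapse (b :: c :: t)) := by
  obtain ⟨d, s, heq, hdc, hcd⟩ := collapse_cons_cons b c t
  rw [heq] at h ⊢
  rcases hab.lt_or_gt with hab | hba
  · have hca := hup hab
    exact up hab ((hdc (hca.trans hab).le).trans_lt hca) h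
  · have hac := hdown hba
    exact down hba (hac.trans_le (hcd (hba.trans hac).le)) h

end OutwardZigzag

lemma outwardZigzag_collapse_of_extendsRange : ∀ (l : List ℝ) (a lo hi : ℝ), lo ≤ a → a ≤ hi →
    ExtendsRange lo hi l → OutwardZigzag (collapse (a :: l))
  | [], a, _, _, _, _, _ => by
    rw [collapse.eq_def]
    exact .singleton a
  | [b], a, lo, hi, hlo, hhi, ⟨hb, _⟩ => by
    rw [collapse.eq_def]
    exact .pair (by rintro rfl; rcases hb with hb | hb <;> linarith)
  | b :: c :: t, a, lo, hi, hlo, hhi, ⟨hb, hct⟩ => by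
    have hab : a ≠ b := by rintro rfl; rcases hb with hb | hb <;> linarith
    have hc : c < min lo b ∨ max hi b < c := hct.1
    have hca : (c < a ∧ c < b) ∨ (a < c ∧ b < c) := by
      rcases hc with hc | hc
      · exact .inl ⟨hc.trans_le ((min_le_left _ _).trans hlo), hc.trans_le (min_le_right _ _)⟩
      · exact .inr ⟨(hhi.trans (le_max_left _ _)).trans_lt hc, (le_max_right _ _).trans_lt hc⟩
    rw [collapse_cons_cons_cons]
    split_ifs with hmono
    · exact outwardZigzag_collapse_of_extendsRange (c :: t) a (min lo b) (max hi b)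
        ((min_le_left _ _).trans hlo) (hhi.trans (le_max_left _ _)) hct
    · refine .cons_collapse hab (fun hab' => ?_) (fun hba => ?_)
        (outwardZigzag_collapse_of_extendsRange (c :: t) b (min lo b) (max hi b)
          (min_le_right _ _) (le_max_right _ _) hct)
      · rcases hca with hca | hca
        · exact hca.1
        · exact absurd (.inl ⟨hab', hca.2⟩) hmono
      · rcases hca with hca | hca
        · exact absurd (.inr ⟨hca.2, hba⟩) hmono
        · exact hca.1
termination_by l => l.length

lemma outwardZigzag_grow : ∀ p : List ℝ, OutwardZigzag (grow p)
  | [] => .nil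
  | x :: xs => outwardZigzag_collapse_of_extendsRange _ x x x le_rfl le_rfl
      (extendsRange_growAux x x xs)

/-- In the growing curve, consecutive vertices alternate between local minima and maxima,
the subsequence of local maxima is strictly increasing, and the subsequence of local minima
is strictly decreasing. -/
theorem grow_alternates (p : List ℝ) :
    (∀ i, ∀ h : i + 1 < (grow p).length,
      (grow p).get ⟨i, by omega⟩ ≠ (grow p).get ⟨i + 1, h⟩) ∧
    (∀ i, ∀ h : i + 2 < (grow p).length,
      ((grow p).get ⟨i, by omega⟩ < (grow p).get ⟨i + 1, by omega⟩ →
        (grow p).get ⟨i + 2, h⟩ < (grow p).get ⟨i, by omega⟩) ∧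
      ((grow p).get ⟨i + 1, by omega⟩ < (grow p).get ⟨i, by omega⟩ →
        (grow p).get ⟨i, by omega⟩ < (grow p).get ⟨i + 2, h⟩)) := by
  have h := outwardZigzag_grow p
  exact ⟨fun i hi => h.getElem_ne i hi, fun i hi => h.getElem_turn i hi⟩
end
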